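/- (Zero-loop criterion.) Let d ≥ 1, let A be a real orthogonal d×d matrix with A² = I and A ≠ I, let Â be the (d+1)×(d+1) block-diagonal matrix diag(A, 1) (so Â is orthogonal with Â² = I), and let ω ∈ ℂ with ω² = 1. Then the following are equivalent: (i) for every p ∈ ℝ^{d+1}, (I − ω·Â^(2)) · w(p, Âp) = 0, where I is the identity matrix indexed by pairs (i,j) with 1 ≤ i < j ≤ d+1; (ii) ω = −1. -/

import Mathlib

open Matrix

/-- The second compound matrix of an `n × n` matrix `A`: rows and columns are indexed by
the pairs `(i, j)` with `i < j`, and the entry at `((i,j),(k,l))` is the determinant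
`A i k * A j l - A i l * A j k` of the corresponding `2 × 2` submatrix of `A`. -/
def compound2 {R : Type*} [CommRing R] {n : ℕ} (A : Matrix (Fin n) (Fin n) R) :
    Matrix {p : Fin n × Fin n // p.1 < p.2} {p : Fin n × Fin n // p.1 < p.2} R :=
  Matrix.of fun P Q =>
    A P.1.1 Q.1.1 * A P.1.2 Q.1.2 - A P.1.1 Q.1.2 * A P.1.2 Q.1.1

/-- The Plücker coordinates of the 2-extensor `x ∧ y`: the vector indexed by pairs
`(i, j)` with `i < j` whose `(i,j)`-entry is `x i * y j - x j * y i`. -/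
def plucker {R : Type*} [CommRing R] {n : ℕ} (x y : Fin n → R) :
    {p : Fin n × Fin n // p.1 < p.2} → R :=
  fun P => x P.1.1 * y P.1.2 - x P.1.2 * y P.1.1

/-!
Since `Â² = 1`, the compound `Â⁽²⁾` sends `w(p, Âp)` to `w(Âp, p) = -w(p, Âp)`, so
`(I - ω Â⁽²⁾) w(p, Âp) = (1 + ω) w(p, Âp)`. It remains to find `p` with `w(p, Âp) ≠ 0`:
as `A² = 1` and `A ≠ 1`, some `u ≠ 0` satisfies `Au = -u`, and for `p = (u, 1)` the
`(k, d+1)` coordinate of `w(p, Âp)` is `2 u_k`.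
-/

theorem Fintype.sum_prod_eq_sum_lt_add_swap {ι M : Type*} [Fintype ι] [LinearOrder ι]
    [AddCommMonoid M] (G : ι × ι → M) (hG : ∀ i, G (i, i) = 0) :
    ∑ p, G p = ∑ P : {p : ι × ι // p.1 < p.2}, (G P + G P.1.swap) := by
  classical
  have hsplit : ∀ p : ι × ι,
      G p = (if p.1 < p.2 then G p else 0) + if p.2 < p.1 then G p else 0 := by
    rintro ⟨i, j⟩
    rcases lt_trichotomy i j with h | rfl | h
    · simp [h, h.not_gt]
    · simp [hG]
    · simp [h, h.not_gt]
  have hswap : ∑ p : ι × ι, (if p.2 < p.1 then G p else 0)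
      = ∑ p : ι × ι, if p.1 < p.2 then G p.swap else 0 :=
    Fintype.sum_equiv (Equiv.prodComm ι ι) _ _ fun _ => rfl
  rw [Fintype.sum_congr _ _ hsplit, Finset.sum_add_distrib, hswap, Finset.sum_add_distrib,
    ← Finset.sum_filter, ← Finset.sum_filter]
  congr 1 <;> exact Finset.sum_subtype _ (by simp) _

theorem compound2_mulVec_plucker {R : Type*} [CommRing R] {n : ℕ}
    (A : Matrix (Fin n) (Fin n) R) (x y : Fin n → R) :
    compound2 A *ᵥ plucker x y = plucker (A *ᵥ x) (A *ᵥ y) := by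
  ext ⟨⟨i, j⟩, hij⟩
  simp only [mulVec, dotProduct, plucker, compound2, of_apply, Finset.sum_mul_sum,
    ← Fintype.sum_prod_type', ← Finset.sum_sub_distrib]
  rw [Fintype.sum_prod_eq_sum_lt_add_swap _ fun k => by ring]
  exact Finset.sum_congr rfl fun _ _ => by simp only [Prod.fst_swap, Prod.snd_swap]; ring

theorem plucker_swap {R : Type*} [CommRing R] {n : ℕ} (x y : Fin n → R) :
    plucker y x = -plucker x y := by
  ext; simp only [plucker, Pi.neg_apply]; ring

theorem compound2_mulVec_plucker_mulVec_self {R : Type*} [CommRing R] {n : ℕ}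
    {B : Matrix (Fin n) (Fin n) R} (hB : B * B = 1) (x : Fin n → R) :
    compound2 B *ᵥ plucker x (B *ᵥ x) = -plucker x (B *ᵥ x) := by
  rw [compound2_mulVec_plucker, mulVec_mulVec, hB, one_mulVec, plucker_swap]

theorem one_sub_smul_compound2_mulVec_plucker_mulVec_self {R : Type*} [CommRing R] {n : ℕ}
    {B : Matrix (Fin n) (Fin n) R} (hB : B * B = 1) (ω : R) (x : Fin n → R) :
    (1 - ω • compound2 B) *ᵥ plucker x (B *ᵥ x) = (1 + ω) • plucker x (B *ᵥ x) := by
  rw [sub_mulVec, one_mulVec, smul_mulVec, compound2_mulVec_plucker_mulVec_self hB]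
  module

theorem RingHom.map_plucker {R S : Type*} [CommRing R] [CommRing S] {n : ℕ} (f : R →+* S)
    (x y : Fin n → R) : (fun q => f (plucker x y q)) = plucker (f ∘ x) (f ∘ y) := by
  ext; simp [plucker]

theorem Matrix.exists_mulVec_eq_neg_of_mul_self_eq_one {R : Type*} [CommRing R] {n : Type*}
    [Fintype n] [DecidableEq n] {A : Matrix n n R} (hA : A * A = 1) (hA1 : A ≠ 1) :
    ∃ u, u ≠ 0 ∧ A *ᵥ u = -u := by
  obtain ⟨x, hx⟩ : ∃ x, A *ᵥ x ≠ x := by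
    simpa [ext_iff_mulVec] using hA1
  refine ⟨x - A *ᵥ x, sub_ne_zero.mpr hx.symm, ?_⟩
  rw [mulVec_sub, mulVec_mulVec, hA, one_mulVec, neg_sub]

theorem reindex_fromBlocks_mul_self_eq_one {l m n R : Type*} [Fintype l] [Fintype m]
    [Fintype n] [DecidableEq l] [DecidableEq m] [DecidableEq n] [Semiring R] (e : l ⊕ m ≃ n)
    {A : Matrix l l R} {D : Matrix m m R} (hA : A * A = 1) (hD : D * D = 1) :
    reindex e e (fromBlocks A 0 0 D) * reindex e e (fromBlocks A 0 0 D) = 1 := by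
  rw [reindex_apply, submatrix_mul_equiv, fromBlocks_multiply]
  simp [hA, hD]

theorem reindex_fromBlocks_mulVec_comp_symm {l m n R : Type*} [Fintype l] [Fintype m]
    [Fintype n] [Semiring R] (e : l ⊕ m ≃ n) (A : Matrix l l R) (D : Matrix m m R)
    (u : l → R) (v : m → R) :
    reindex e e (fromBlocks A 0 0 D) *ᵥ (Sum.elim u v ∘ e.symm) =
      Sum.elim (A *ᵥ u) (D *ᵥ v) ∘ e.symm := by
  rw [reindex_apply, submatrix_mulVec_equiv, Equiv.symm_symm, Function.comp_assoc,
    e.symm_comp_self, Function.comp_id, fromBlocks_mulVec]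
  simp

theorem exists_plucker_mulVec_ne_zero {R : Type*} [CommRing R] [NoZeroDivisors R]
    [NeZero (2 : R)] {d : ℕ} {A : Matrix (Fin d) (Fin d) R} (hA : A * A = 1) (hA1 : A ≠ 1) :
    ∃ p : Fin (d + 1) → R,
      plucker p (reindex finSumFinEquiv finSumFinEquiv (fromBlocks A 0 0 1) *ᵥ p) ≠ 0 := by
  obtain ⟨u, hu, hAu⟩ := exists_mulVec_eq_neg_of_mul_self_eq_one hA hA1
  obtain ⟨k, hk⟩ := Function.ne_iff.mp hu
  refine ⟨Sum.elim u 1 ∘ finSumFinEquiv.symm, fun h => hk ?_⟩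
  have hlt : finSumFinEquiv (Sum.inl k) < finSumFinEquiv (Sum.inr (0 : Fin 1)) := by
    simp [Fin.lt_def]
  have h2u : plucker (Sum.elim u 1 ∘ finSumFinEquiv.symm)
      (Sum.elim (-u) 1 ∘ finSumFinEquiv.symm) ⟨(_, _), hlt⟩ = 2 * u k := by
    simp [plucker]
    ring
  rw [reindex_fromBlocks_mulVec_comp_symm, hAu, one_mulVec] at h
  have h0 := congrFun h ⟨(_, _), hlt⟩
  rw [h2u] at h0
  exact (mul_eq_zero.mp h0).resolve_left two_ne_zero

theorem zero_loop_criterion_general (d : ℕ)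
    (A : Matrix (Fin d) (Fin d) ℝ) (hA2 : A * A = 1) (hAne : A ≠ 1)
    (Ahat : Matrix (Fin (d + 1)) (Fin (d + 1)) ℝ)
    (hAhat : Ahat = Matrix.reindex finSumFinEquiv finSumFinEquiv
      (Matrix.fromBlocks A 0 0 (1 : Matrix (Fin 1) (Fin 1) ℝ)))
    (ω : ℂ) :
    (∀ p : Fin (d + 1) → ℝ,
        (1 - ω • compound2 (Ahat.map Complex.ofReal)) *ᵥ
          (fun q => ((plucker p (Ahat *ᵥ p)) q : ℂ)) = 0) ↔ ω = -1 := by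
  have hAhat2 : Ahat.map Complex.ofRealHom * Ahat.map Complex.ofRealHom = 1 := by
    rw [← Matrix.map_mul, hAhat, reindex_fromBlocks_mul_self_eq_one _ hA2 (mul_one 1),
      Matrix.map_one _ (map_zero _) (map_one _)]
  have hcast (p : Fin (d + 1) → ℝ) : (fun q => ((plucker p (Ahat *ᵥ p)) q : ℂ)) =
      plucker (Complex.ofRealHom ∘ p)
        (Ahat.map Complex.ofRealHom *ᵥ (Complex.ofRealHom ∘ p)) :=
    (Complex.ofRealHom.map_plucker _ _).trans
      (congrArg _ (funext (Complex.ofRealHom.map_mulVec Ahat p)))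
  change (∀ p, (1 - ω • compound2 (Ahat.map Complex.ofRealHom)) *ᵥ _ = 0) ↔ _
  simp_rw [hcast, one_sub_smul_compound2_mulVec_plucker_mulVec_self hAhat2, smul_eq_zero,
    ← hcast, add_eq_zero_iff_eq_neg']
  refine ⟨fun h => ?_, fun hω _ => Or.inl hω⟩
  obtain ⟨p, hp⟩ := exists_plucker_mulVec_ne_zero hA2 hAne
  refine (h p).resolve_right fun h0 => hp ?_
  ext q
  rw [← hAhat]
  exact Complex.ofReal_eq_zero.mp (congrFun h0 q)

/-- Zero-loop criterion: for an orthogonal real involution `A ≠ 1`, with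
`Â = diag(A, 1)` and `ω² = 1`, the vector `(I - ω Â⁽²⁾) ⬝ w(p, Âp)` vanishes for all
`p` if and only if `ω = -1`. -/
theorem zero_loop_criterion (d : ℕ) (hd : 1 ≤ d)
    (A : Matrix (Fin d) (Fin d) ℝ) (hA : Aᵀ * A = 1) (hA2 : A * A = 1) (hAne : A ≠ 1)
    (Ahat : Matrix (Fin (d + 1)) (Fin (d + 1)) ℝ)
    (hAhat : Ahat = Matrix.reindex finSumFinEquiv finSumFinEquiv
      (Matrix.fromBlocks A 0 0 (1 : Matrix (Fin 1) (Fin 1) ℝ)))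
    (ω : ℂ) (hω : ω ^ 2 = 1) :
    (∀ p : Fin (d + 1) → ℝ,
        (1 - ω • compound2 (Ahat.map Complex.ofReal)) *ᵥ
          (fun q => ((plucker p (Ahat *ᵥ p)) q : ℂ)) = 0) ↔ ω = -1 :=
  zero_loop_criterion_general d A hA2 hAne Ahat hAhat ω
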